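/- The family of BDT priors π_{T_o}(·|q), indexed by finite label sets o, is marginally consistent: for any tree τ on leaf set o and any new label i ∉ o, the probability of τ equals the sum of the probabilities of all trees on o ∪ {i} obtained from τ by inserting leaf i into some edge of τ (including the phantom root edge), where the insertion assigns the new internal node type S-with-either-stacking (probability q/2 each) or P (probability 1-q). -/

import Mathlib

/-- Binary decomposition trees (BDTs): ordered binary trees with leaves labelled by
`α` and internal nodes typed `S` (`true`) or `P` (`false`); at an `S` node the left
child is the 'upper child'. -/
inductive BDT (α : Type) : Type
  | leaf : α → BDT α
  | node : Bool → BDT α → BDT α → BDT α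

namespace BDT

/-- Number of leaves. -/
def numLeaves {α : Type} : BDT α → ℕ
  | .leaf _ => 1
  | .node _ l r => l.numLeaves + r.numLeaves

/-- Number of `S`-typed internal nodes. -/
def sCount {α : Type} : BDT α → ℕ
  | .leaf _ => 0
  | .node s l r => (if s then 1 else 0) + l.sCount + r.sCount

/-- Number of edges, counting the phantom edge above the root. -/
def edgeCount {α : Type} : BDT α → ℕ
  | .leaf _ => 1
  | .node _ l r => 1 + l.edgeCount + r.edgeCount

/-- `insertAt t e s up a`: insert the new leaf `a` at the edge of `t` with index `e`
(edge `0` is the phantom edge above the root), breaking the edge with a new internal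
node of type `s` (`true` = `S`, `false` = `P`); for an `S` node, `up` decides whether
the new leaf is the upper child. -/
def insertAt {α : Type} : BDT α → ℕ → Bool → Bool → α → BDT α
  | t, 0, s, up, a => if up then .node s (.leaf a) t else .node s t (.leaf a)
  | .leaf b, _ + 1, _, _, _ => .leaf b
  | .node s0 l r, k + 1, s, up, a =>
      if k < l.edgeCount then .node s0 (l.insertAt k s up a) r
      else .node s0 l (r.insertAt (k - l.edgeCount) s up a)

end BDT

/-- The BDT prior `π(t|q) = (1/(2n-3)!!) (q/2)^{S(t)} (1-q)^{n-1-S(t)}` on trees with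
`n` leaves, as a function of the number `s = S(t)` of `S`-nodes. -/
noncomputable def treePrior (n : ℕ) (q : ℝ) (s : ℕ) : ℝ :=
  (1 / (Nat.doubleFactorial (2 * n - 3) : ℝ)) * (q / 2) ^ s * (1 - q) ^ (n - 1 - s)

/-!
Inserting a leaf at any of the `2n - 1` edges of a tree on `n` leaves adds one internal
node and leaves the other `S`-nodes alone, so every insertion contributes the same amount:
`(q/2)` for each of the two stackings of an `S`-node and `(1 - q)` for a `P`-node, which
add up to the prior weight `(q/2)^S (1-q)^{n-1-S}` of the original tree. The normalizing
constants match because `(2n - 1)‼ = (2n - 1) (2n - 3)‼`.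
-/

open scoped Nat

namespace BDT

variable {α : Type}

lemma one_le_numLeaves (t : BDT α) : 1 ≤ t.numLeaves := by
  induction t with
  | leaf => simp [numLeaves]
  | node _ l r hl hr => simp only [numLeaves]; omega

lemma sCount_lt_numLeaves (t : BDT α) : t.sCount < t.numLeaves := by
  induction t with
  | leaf => simp [numLeaves, sCount]
  | node s l r hl hr =>
      cases s <;> simp only [numLeaves, sCount, Bool.false_eq_true, ↓reduceIte] <;> omega

lemma edgeCount_add_one (t : BDT α) : t.edgeCount + 1 = 2 * t.numLeaves := by
  induction t with
  | leaf => simp [numLeaves, edgeCount]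
  | node _ l r hl hr => simp only [numLeaves, edgeCount]; omega

lemma sCount_insertAt (t : BDT α) {e : ℕ} (he : e < t.edgeCount) (s up : Bool) (a : α) :
    (t.insertAt e s up a).sCount = t.sCount + if s then 1 else 0 := by
  induction t generalizing e with
  | leaf =>
      obtain rfl : e = 0 := by simpa [edgeCount] using he
      cases up <;> simp [insertAt, sCount]
  | node s₀ l r hl hr =>
      cases e with
      | zero =>
          cases up <;> simp only [insertAt, sCount, Bool.false_eq_true, ↓reduceIte] <;> omega
      | succ k =>
          simp only [edgeCount] at he
          by_cases hk : k < l.edgeCount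
          · simp only [insertAt, hk, if_true, sCount, hl hk]
            omega
          · have hk' : k - l.edgeCount < r.edgeCount := by omega
            simp only [insertAt, hk, if_false, sCount, hr hk']
            omega

end BDT

lemma treePrior_eq_mul_insertion_weight (m s : ℕ) (q : ℝ) (hs : s ≤ m) :
    treePrior (m + 1) q s
      = (2 * m + 1) * (2 * treePrior (m + 2) q (s + 1) + treePrior (m + 2) q s) := by
  have hfac : ((2 * (m + 2) - 3)‼ : ℝ) = (2 * m + 1) * (2 * (m + 1) - 3)‼ := by
    rw [show 2 * (m + 2) - 3 = 2 * m + 1 by omega, show 2 * (m + 1) - 3 = 2 * m - 1 by omega,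
      Nat.doubleFactorial_add_one]
    push_cast
    ring
  have hpos : (0 : ℝ) < (2 * (m + 1) - 3)‼ := by exact_mod_cast Nat.doubleFactorial_pos _
  unfold treePrior
  rw [hfac, show m + 2 - 1 - (s + 1) = m - s by omega, show m + 2 - 1 - s = m - s + 1 by omega,
    show m + 1 - 1 - s = m - s by omega]
  field_simp
  ring

theorem bdt_prior_marginally_consistent_general {α : Type} (n : ℕ)
    (q : ℝ) (τ : BDT α) (hτ : τ.numLeaves = n) (i : α) :
    treePrior n q τ.sCount =
      ∑ e ∈ Finset.range τ.edgeCount,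
        (treePrior (n + 1) q ((τ.insertAt e true true i).sCount)
          + treePrior (n + 1) q ((τ.insertAt e true false i).sCount)
          + treePrior (n + 1) q ((τ.insertAt e false false i).sCount)) := by
  obtain ⟨m, rfl⟩ : ∃ m, n = m + 1 := ⟨n - 1, by have := τ.one_le_numLeaves; omega⟩
  have hedges : τ.edgeCount = 2 * m + 1 := by have := τ.edgeCount_add_one; omega
  have hinsert : ∀ e ∈ Finset.range τ.edgeCount,
      treePrior (m + 2) q ((τ.insertAt e true true i).sCount)
          + treePrior (m + 2) q ((τ.insertAt e true false i).sCount)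
          + treePrior (m + 2) q ((τ.insertAt e false false i).sCount)
        = 2 * treePrior (m + 2) q (τ.sCount + 1) + treePrior (m + 2) q τ.sCount := by
    intro e he
    simp only [τ.sCount_insertAt (Finset.mem_range.1 he), if_true, Bool.false_eq_true, if_false,
      add_zero]
    ring
  rw [Finset.sum_congr rfl hinsert, Finset.sum_const, Finset.card_range, hedges, nsmul_eq_mul,
    treePrior_eq_mul_insertion_weight m τ.sCount q (by have := τ.sCount_lt_numLeaves; omega)]
  push_cast
  ring

/-- Marginal consistency of the family of BDT priors: for any tree `τ` on `n` leaves
and any new leaf label `i`, the prior probability of `τ` equals the sum, over all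
edges `e` of `τ` (including the phantom root edge) and all choices of type for the new
internal node (`S` with either stacking, or `P`), of the prior probabilities of the
trees obtained from `τ` by inserting leaf `i` at `e`. -/
theorem bdt_prior_marginally_consistent {α : Type} (n : ℕ) (hn : 1 ≤ n)
    (q : ℝ) (hq0 : 0 ≤ q) (hq1 : q ≤ 1) (τ : BDT α) (hτ : τ.numLeaves = n) (i : α) :
    treePrior n q τ.sCount =
      ∑ e ∈ Finset.range τ.edgeCount,
        (treePrior (n + 1) q ((τ.insertAt e true true i).sCount)
          + treePrior (n + 1) q ((τ.insertAt e true false i).sCount)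
          + treePrior (n + 1) q ((τ.insertAt e false false i).sCount)) :=
  bdt_prior_marginally_consistent_general n q τ hτ i
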